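/- Suppose i : A → B is perfect and admits an augmentation ε : B → A with augmentation ideal I = ker(ε). Then the relative Frobenius carries A^F ⊗_A I into I (since F_A(a ⊗ x) = i(a)·x^p ∈ I for x ∈ I), and the induced A-linear map A^F ⊗_A I → I, a ⊗ x ↦ i(a)·x^p, is bijective. -/
import Mathlib


open scoped TensorProduct
open CategoryTheory

universe u

/-- `A` regarded as an `A`-algebra via the Frobenius `a ↦ a^p`: the underlying type. -/
def FrobTwist (p : ℕ) (A : Type*) : Type _ := A

instance FrobTwist.instCommRing (p : ℕ) (A : Type*) [CommRing A] : CommRing (FrobTwist p A) :=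
  inferInstanceAs (CommRing A)

/-- The identity of `A`, viewed as a map `A → FrobTwist p A`. -/
def toFrobTwist (p : ℕ) {A : Type*} (a : A) : FrobTwist p A := a

/-- The `A`-algebra structure on `A^F := FrobTwist p A`, with structure map the Frobenius
endomorphism `a ↦ a ^ p`. -/
noncomputable instance FrobTwist.instAlgebra (p : ℕ) (A : Type*) [CommRing A] [Fact p.Prime]
    [CharP A p] : Algebra A (FrobTwist p A) :=
  RingHom.toAlgebra (frobenius A p : A →+* A)

/-- A ring homomorphism `i : A → B` of commutative rings of characteristic `p` is *perfect* if
the relative Frobenius `F_A : A^F ⊗[A] B → B`, the (unique) ring homomorphism with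
`F_A (a ⊗ b) = i a * b ^ p`, is bijective.  Here `B` is an `A`-algebra via `i` and
`A^F` is `A` regarded as an `A`-algebra via the Frobenius of `A`. -/
def IsPerfectRingHom (p : ℕ) [Fact p.Prime] {A B : Type*} [CommRing A] [CommRing B]
    [CharP A p] [CharP B p] (i : A →+* B) : Prop :=
  letI : Algebra A B := i.toAlgebra
  ∃ F : (FrobTwist p A) ⊗[A] B →+* B,
    (∀ (a : A) (b : B), F (toFrobTwist p a ⊗ₜ[A] b) = i a * b ^ p) ∧ Function.Bijective F

/-- Suppose `i : A → B` is perfect and admits an augmentation `ε : B → A` with augmentation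
ideal `I = ker ε`.  Then the relative Frobenius carries `A^F ⊗[A] I` into `I`, and the induced
(`A`-linear, additive) map `A^F ⊗[A] I → I`, `a ⊗ x ↦ i a * x ^ p`, is bijective.
Here `I` is an `A`-module via `i`, and `A`-linearity is recorded on pure tensors via the action
of `A` through plain multiplication on the left factor `A^F`. -/
theorem relativeFrobenius_augmentationIdeal_bijective_of_perfect (p : ℕ) [Fact p.Prime]
    (A B : Type u) [CommRing A] [CommRing B] [CharP A p] [CharP B p] (i : A →+* B)
    (hperf : IsPerfectRingHom p i) (ε : B →+* A) (hεi : ε.comp i = RingHom.id A)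
    (I : Ideal B) (hI : I = RingHom.ker ε) :
    letI : Algebra A B := i.toAlgebra
    ∃ G : (FrobTwist p A) ⊗[A] I →+ I,
      (∀ (a : A) (x : I), ((G (toFrobTwist p a ⊗ₜ[A] x) : B) = i a * (x : B) ^ p)) ∧
      (∀ (c a : A) (x : I),
        G (toFrobTwist p (c * a) ⊗ₜ[A] x) = i c • G (toFrobTwist p a ⊗ₜ[A] x)) ∧
      Function.Bijective G := by
  letI : Algebra A B := i.toAlgebra
  obtain ⟨F, hFspec, hFinj, hFsurj⟩ := hperf
  have hεi' : ∀ a : A, ε (i a) = a := fun a => RingHom.congr_fun hεi a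
  have hmemI : ∀ b : B, b ∈ I ↔ ε b = 0 := fun b => by rw [hI, RingHom.mem_ker]
  have hsub : ∀ b : B, b - i (ε b) ∈ I := fun b => by
    rw [hmemI]; simp [map_sub, hεi']
  -- inclusion I →ₗ[A] B
  let incl : (I : Type u) →ₗ[A] B :=
    { toFun := fun x => (x : B)
      map_add' := fun x y => rfl
      map_smul' := fun a x => rfl }
  -- retraction r : B →ₗ[A] I
  let r : B →ₗ[A] (I : Type u) :=
    { toFun := fun b => ⟨b - i (ε b), hsub b⟩
      map_add' := fun b c => by
        ext; simp only [Submodule.coe_add, map_add]; push_cast; ring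
      map_smul' := fun a b => by
        ext
        show a • b - i (ε (a • b)) = a • (b - i (ε b))
        have : (a • b : B) = i a * b := rfl
        rw [this]
        show i a * b - i (ε (i a * b)) = i a * (b - i (ε b))
        rw [map_mul, hεi', map_mul]
        ring }
  -- q : B →ₗ[A] B, b ↦ i (ε b)
  let q : B →ₗ[A] B :=
    { toFun := fun b => i (ε b)
      map_add' := fun b c => by simp [map_add]
      map_smul' := fun a b => by
        show i (ε (a • b)) = a • i (ε b)
        have h1 : (a • b : B) = i a * b := rfl
        have h2 : ∀ c : B, (a • c : B) = i a * c := fun c => rfl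
        rw [h1, h2, map_mul, hεi', map_mul] }
  have hri : r ∘ₗ incl = LinearMap.id := by
    ext x
    have hx : ε (x : B) = 0 := (hmemI _).1 x.2
    show ((x : B) - i (ε (x : B)) : B) = (x : B)
    rw [hx, map_zero, sub_zero]
  have hsplit : incl ∘ₗ r + q = LinearMap.id := by
    ext b
    show ((b - i (ε b)) + i (ε b) : B) = b
    ring
  let L := LinearMap.lTensor (FrobTwist p A) incl
  have hcompid : (LinearMap.lTensor (FrobTwist p A) r) ∘ₗ L = LinearMap.id := by
    rw [← LinearMap.lTensor_comp, hri, LinearMap.lTensor_id]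
  have hLinv : Function.LeftInverse (LinearMap.lTensor (FrobTwist p A) r) L := fun x => by
    rw [← LinearMap.comp_apply, hcompid, LinearMap.id_apply]
  have hLinj : Function.Injective L := hLinv.injective
  have hmem : ∀ t : (FrobTwist p A) ⊗[A] (I : Type u), F (L t) ∈ I := by
    intro t
    induction t using TensorProduct.induction_on with
    | zero => simp only [map_zero]; exact I.zero_mem
    | tmul a x =>
        have h1 : L (a ⊗ₜ[A] x) = a ⊗ₜ[A] (x : B) := rfl
        have h2 : F (a ⊗ₜ[A] (x : B)) = i a * (x : B) ^ p := hFspec a (x : B)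
        rw [h1, h2]
        exact I.mul_mem_left _ (I.pow_mem_of_mem x.2 p (Fact.out : p.Prime).pos)
    | add s t hs ht => rw [map_add, map_add]; exact I.add_mem hs ht
  let G : (FrobTwist p A) ⊗[A] (I : Type u) →+ (I : Type u) :=
    AddMonoidHom.mk' (fun t => (⟨F (L t), hmem t⟩ : (I : Type u))) (fun s t => by
      apply Subtype.ext
      show F (L (s + t)) = F (L s) + F (L t)
      rw [map_add, map_add])
  have hGspec : ∀ (a : A) (x : (I : Type u)),
      ((G (toFrobTwist p a ⊗ₜ[A] x) : B) = i a * (x : B) ^ p) := by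
    intro a x
    show F (L (toFrobTwist p a ⊗ₜ[A] x)) = i a * (x : B) ^ p
    have : L (toFrobTwist p a ⊗ₜ[A] x) = toFrobTwist p a ⊗ₜ[A] (x : B) := rfl
    rw [this, hFspec]
  refine ⟨G, hGspec, ?_, ?_, ?_⟩
  · intro c a x
    ext
    rw [hGspec]
    show i (c * a) * (x : B) ^ p = i c • (G (toFrobTwist p a ⊗ₜ[A] x) : B)
    have : i c • (G (toFrobTwist p a ⊗ₜ[A] x) : B) = i c * (G (toFrobTwist p a ⊗ₜ[A] x) : B) :=
      rfl
    rw [this, hGspec, map_mul, mul_assoc]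
  · intro s t hst
    have h1 : F (L s) = F (L t) := congrArg Subtype.val hst
    exact hLinj (hFinj h1)
  · intro y
    obtain ⟨t, ht⟩ := hFsurj (y : B)
    refine ⟨LinearMap.lTensor (FrobTwist p A) r t, ?_⟩
    -- F (lTensor q t) is in the range of i
    have hrange : ∀ s : (FrobTwist p A) ⊗[A] B,
        ∃ c : A, F (LinearMap.lTensor (FrobTwist p A) q s) = i c := by
      intro s
      induction s using TensorProduct.induction_on with
      | zero => exact ⟨0, by simp⟩
      | tmul a b =>
          refine ⟨(show A from a) * (ε b) ^ p, ?_⟩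
          have h1 : LinearMap.lTensor (FrobTwist p A) q (a ⊗ₜ[A] b) = a ⊗ₜ[A] (i (ε b)) := rfl
          have h2 : F (a ⊗ₜ[A] (i (ε b))) = i (show A from a) * (i (ε b)) ^ p :=
            hFspec (show A from a) (i (ε b))
          rw [h1, h2, map_mul, map_pow]
      | add u v hu hv =>
          obtain ⟨c, hc⟩ := hu; obtain ⟨d, hd⟩ := hv
          exact ⟨c + d, by rw [map_add, map_add, hc, hd, map_add]⟩
    obtain ⟨c, hc⟩ := hrange t
    have hdecomp : L (LinearMap.lTensor (FrobTwist p A) r t)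
        + LinearMap.lTensor (FrobTwist p A) q t = t := by
      have : L ∘ₗ LinearMap.lTensor (FrobTwist p A) r + LinearMap.lTensor (FrobTwist p A) q
          = LinearMap.id := by
        rw [← LinearMap.lTensor_comp, ← LinearMap.lTensor_add, hsplit, LinearMap.lTensor_id]
      calc L (LinearMap.lTensor (FrobTwist p A) r t) + LinearMap.lTensor (FrobTwist p A) q t
          = (L ∘ₗ LinearMap.lTensor (FrobTwist p A) r + LinearMap.lTensor (FrobTwist p A) q) t :=
            rfl
        _ = t := by rw [this]; rfl
    have key : F (L (LinearMap.lTensor (FrobTwist p A) r t)) + i c = (y : B) := by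
      rw [← hc, ← map_add, hdecomp, ht]
    -- i c ∈ I, hence c = 0
    have hic : i c ∈ I := by
      have : i c = (y : B) - F (L (LinearMap.lTensor (FrobTwist p A) r t)) := by
        rw [← key]; ring
      rw [this]
      exact I.sub_mem y.2 (hmem _)
    have hc0 : c = 0 := by
      have := (hmemI _).1 hic
      rwa [hεi'] at this
    ext
    show F (L (LinearMap.lTensor (FrobTwist p A) r t)) = (y : B)
    rw [← key, hc0, map_zero, add_zero]
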